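/- A Toeplitz graph T_n⟨t_1, t_2⟩ is claw-free if and only if n ≤ t_1 + t_2 or t_2 = 2t_1. -/

import Mathlib

/-- The Toeplitz graph `T_n⟨t 1, …, t k⟩` on vertex set `Fin n`:
distinct vertices `x, y` are adjacent iff `|x − y| = t i` for some `1 ≤ i ≤ k`. -/
def toeplitzGraph (n k : ℕ) (t : ℕ → ℕ) : SimpleGraph (Fin n) where
  Adj x y := x ≠ y ∧ ∃ i, 1 ≤ i ∧ i ≤ k ∧ ((x : ℤ) - (y : ℤ)).natAbs = t i
  symm := by
    constructor
    rintro x y ⟨hxy, i, h1, h2, h3⟩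
    exact ⟨hxy.symm, i, h1, h2, by omega⟩
  loopless := by constructor; rintro x ⟨hx, -⟩; exact hx rfl

/-- A graph has a claw if it contains an induced `K_{1,3}`:
a center `a` adjacent to three pairwise distinct, pairwise nonadjacent leaves `b, c, d`. -/
def HasClaw {V : Type*} (G : SimpleGraph V) : Prop :=
  ∃ a b c d : V, G.Adj a b ∧ G.Adj a c ∧ G.Adj a d ∧
    b ≠ c ∧ b ≠ d ∧ c ≠ d ∧ ¬ G.Adj b c ∧ ¬ G.Adj b d ∧ ¬ G.Adj c d

/-- A graph is claw-free if it has no claw. -/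
def ClawFree {V : Type*} (G : SimpleGraph V) : Prop := ¬ HasClaw G

lemma toeplitz_adj_iff (n : ℕ) (t : ℕ → ℕ) (x y : Fin n) :
    (toeplitzGraph n 2 t).Adj x y ↔ x ≠ y ∧
      (((x : ℤ) - (y : ℤ)).natAbs = t 1 ∨ ((x : ℤ) - (y : ℤ)).natAbs = t 2) := by
  constructor
  · rintro ⟨h, i, h1, h2, h3⟩
    refine ⟨h, ?_⟩
    interval_cases i
    · exact Or.inl h3
    · exact Or.inr h3
  · rintro ⟨h, h3 | h3⟩
    · exact ⟨h, 1, le_refl _, by omega, h3⟩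
    · exact ⟨h, 2, by omega, le_refl _, h3⟩

lemma natAbs_eq_cases {n : ℕ} (x y : Fin n) (k : ℕ)
    (h : ((x : ℤ) - (y : ℤ)).natAbs = k) :
    x.val = y.val + k ∨ y.val = x.val + k := by omega

lemma natAbs_ne_cases {n : ℕ} (x y : Fin n) (k : ℕ)
    (h : ((x : ℤ) - (y : ℤ)).natAbs ≠ k) :
    x.val ≠ y.val + k ∧ y.val ≠ x.val + k := by
  constructor <;> intro hx <;> exact h (by omega)

set_option maxHeartbeats 1000000 in
lemma claw_arith (n t1 t2 A B C D : ℕ)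
    (hpos : 0 < t1) (h12 : t1 < t2)
    (h : n ≤ t1 + t2 ∨ t2 = 2 * t1)
    (hb : B < n) (hc : C < n) (hd : D < n)
    (hbc : B ≠ C) (hbd : B ≠ D) (hcd : C ≠ D)
    (H1 : (A = B + t1 ∨ B = A + t1) ∨ (A = B + t2 ∨ B = A + t2))
    (H2 : (A = C + t1 ∨ C = A + t1) ∨ (A = C + t2 ∨ C = A + t2))
    (H3 : (A = D + t1 ∨ D = A + t1) ∨ (A = D + t2 ∨ D = A + t2))
    (N1 : B ≠ C + t1 ∧ C ≠ B + t1 ∧ B ≠ C + t2 ∧ C ≠ B + t2)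
    (N2 : B ≠ D + t1 ∧ D ≠ B + t1 ∧ B ≠ D + t2 ∧ D ≠ B + t2)
    (N3 : C ≠ D + t1 ∧ D ≠ C + t1 ∧ C ≠ D + t2 ∧ D ≠ C + t2) : False := by
  omega

set_option maxHeartbeats 1000000 in
/-- `T_n⟨t 1, t 2⟩` is claw-free iff `n ≤ t 1 + t 2` or `t 2 = 2 * t 1`. -/
theorem stmt_11 (n : ℕ) (t : ℕ → ℕ)
    (hpos : 0 < t 1) (h12 : t 1 < t 2) (h2n : t 2 < n) :
    ClawFree (toeplitzGraph n 2 t) ↔ n ≤ t 1 + t 2 ∨ t 2 = 2 * t 1 := by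
  constructor
  · intro h
    by_contra hcon
    push_neg at hcon
    obtain ⟨hn, ht⟩ := hcon
    refine h ⟨⟨t 2, h2n⟩, ⟨0, by omega⟩, ⟨t 2 - t 1, by omega⟩, ⟨t 2 + t 1, by omega⟩,
      ?_, ?_, ?_, ?_, ?_, ?_, ?_, ?_, ?_⟩
    · rw [toeplitz_adj_iff]
      refine ⟨by simp [Fin.ext_iff]; omega, Or.inr ?_⟩
      simp only [Fin.val_mk]
      omega
    · rw [toeplitz_adj_iff]
      refine ⟨by simp [Fin.ext_iff]; omega, Or.inl ?_⟩
      simp only [Fin.val_mk]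
      omega
    · rw [toeplitz_adj_iff]
      refine ⟨by simp [Fin.ext_iff]; omega, Or.inl ?_⟩
      simp only [Fin.val_mk]
      omega
    · simp [Fin.ext_iff]; omega
    · simp [Fin.ext_iff]; omega
    · simp [Fin.ext_iff]; omega
    · rw [toeplitz_adj_iff]
      rintro ⟨-, h3 | h3⟩ <;> simp only [Fin.val_mk] at h3 <;> omega
    · rw [toeplitz_adj_iff]
      rintro ⟨-, h3 | h3⟩ <;> simp only [Fin.val_mk] at h3 <;> omega
    · rw [toeplitz_adj_iff]
      rintro ⟨-, h3 | h3⟩ <;> simp only [Fin.val_mk] at h3 <;> omega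
  · rintro h ⟨a, b, c, d, hab, hac, had, hbc, hbd, hcd, nbc, nbd, ncd⟩
    rw [toeplitz_adj_iff] at hab hac had nbc nbd ncd
    have Hbc : ¬ (((b : ℤ) - (c : ℤ)).natAbs = t 1 ∨ ((b : ℤ) - (c : ℤ)).natAbs = t 2) :=
      fun hx => nbc ⟨hbc, hx⟩
    have Hbd : ¬ (((b : ℤ) - (d : ℤ)).natAbs = t 1 ∨ ((b : ℤ) - (d : ℤ)).natAbs = t 2) :=
      fun hx => nbd ⟨hbd, hx⟩
    have Hcd : ¬ (((c : ℤ) - (d : ℤ)).natAbs = t 1 ∨ ((c : ℤ) - (d : ℤ)).natAbs = t 2) :=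
      fun hx => ncd ⟨hcd, hx⟩
    obtain ⟨-, h1⟩ := hab
    obtain ⟨-, h2⟩ := hac
    obtain ⟨-, h3⟩ := had
    have hb := b.isLt
    have hc := c.isLt
    have hd := d.isLt
    push_neg at Hbc Hbd Hcd
    have hbc' : b.val ≠ c.val := fun hx => hbc (Fin.ext hx)
    have hbd' : b.val ≠ d.val := fun hx => hbd (Fin.ext hx)
    have hcd' : c.val ≠ d.val := fun hx => hcd (Fin.ext hx)
    have H1 := h1.imp (natAbs_eq_cases a b (t 1)) (natAbs_eq_cases a b (t 2))
    have H2 := h2.imp (natAbs_eq_cases a c (t 1)) (natAbs_eq_cases a c (t 2))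
    have H3 := h3.imp (natAbs_eq_cases a d (t 1)) (natAbs_eq_cases a d (t 2))
    obtain ⟨B1, B2⟩ := natAbs_ne_cases b c (t 1) Hbc.1
    obtain ⟨B3, B4⟩ := natAbs_ne_cases b c (t 2) Hbc.2
    obtain ⟨C1, C2⟩ := natAbs_ne_cases b d (t 1) Hbd.1
    obtain ⟨C3, C4⟩ := natAbs_ne_cases b d (t 2) Hbd.2
    obtain ⟨D1, D2⟩ := natAbs_ne_cases c d (t 1) Hcd.1
    obtain ⟨D3, D4⟩ := natAbs_ne_cases c d (t 2) Hcd.2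
    exact claw_arith n (t 1) (t 2) a.val b.val c.val d.val hpos h12 h hb hc hd
      hbc' hbd' hcd' H1 H2 H3
      ⟨B1, B2, B3, B4⟩ ⟨C1, C2, C3, C4⟩ ⟨D1, D2, D3, D4⟩
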